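/- arXiv:1906.09180 — 8 statements merged into one kernel-verified Lean document; each statement's English description precedes it below -/
import Mathlib

section
/- Let φ be a CNF formula with variables x_1,…,x_n and nonempty clauses C_1,…,C_m (each clause a set of at most three literals), and let G be the graph constructed from φ as described. Then φ is satisfiable if and only if G has a dominating set of size n+1. -/
/-- `D` is a dominating set: every vertex is in `D` or adjacent to a vertex of `D`. -/
def IsDominating {V : Type*} (G : SimpleGraph V) (D : Set V) : Prop :=
  ∀ v, v ∈ D ∨ ∃ u ∈ D, G.Adj u v

/-- Vertices of the graph built from a CNF formula with `n` variables and `m`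
clauses: for each variable `i` a triangle `var i`, `pos i` (the literal `xᵢ`),
`neg i` (the literal `¬xᵢ`); for each clause `j` a vertex `cls j`; and three
extra vertices `y1, y2, y3`. -/
inductive PhiVtx (n m : ℕ) where
  | var (i : Fin n)
  | pos (i : Fin n)
  | neg (i : Fin n)
  | cls (j : Fin m)
  | y1
  | y2
  | y3
  deriving DecidableEq, Fintype

/-- Base adjacency relation of the construction (clauses are given as finite
sets of literals, a literal being a pair of a variable index and a polarity):
triangles `var i, pos i, neg i`; an edge `cls j — pos i` whenever `xᵢ`
occurs positively in clause `j` and `cls j — neg i` whenever it occurs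
negatively; `y1` adjacent to every clause vertex; edges `y1 — y2`, `y2 — y3`. -/
def phiRel {n m : ℕ} (C : Fin m → Finset (Fin n × Bool)) :
    PhiVtx n m → PhiVtx n m → Prop
  | .var i, .pos i' => i = i'
  | .var i, .neg i' => i = i'
  | .pos i, .neg i' => i = i'
  | .cls j, .pos i => (i, true) ∈ C j
  | .cls j, .neg i => (i, false) ∈ C j
  | .y1, .cls _ => True
  | .y1, .y2 => True
  | .y2, .y3 => True
  | _, _ => False

/-- The graph constructed from the CNF formula. -/
def phiGraph {n m : ℕ} (C : Fin m → Finset (Fin n × Bool)) :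
    SimpleGraph (PhiVtx n m) :=
  SimpleGraph.fromRel (phiRel C)

/-!
The closed neighbourhoods `{var i, pos i, neg i}` of the variable vertices and `{y2, y3}` of `y3`
are `n + 1` pairwise disjoint sets, each of which a dominating set must meet. A dominating set of
size `n + 1` therefore picks exactly one vertex from each of them and nothing else; in particular
it avoids `y1` and the clause vertices, so every clause vertex is dominated by a literal vertex,
and the literal picked in each triangle is a satisfying assignment. Conversely, the true literals
together with `y2` dominate the graph.
-/

open Function Set

section Transversal

variable {α ι : Type*} {S : ι → Set α} {f : ι → α}

theorem Pairwise.injective_of_mem_disjoint (hS : Pairwise (Disjoint on S))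
    (hf : ∀ i, f i ∈ S i) : Injective f := fun i j hij =>
  (hS.pairwiseDisjoint univ).elim_set (mem_univ i) (mem_univ j) (f i) (hf i) (hij ▸ hf j)

theorem Set.eq_range_of_ncard_eq {D : Set α} (hD : D.Finite) (hS : Pairwise (Disjoint on S))
    (hf : ∀ i, f i ∈ D ∩ S i) (hcard : D.ncard = Nat.card ι) : D = range f := by
  have hsub : range f ⊆ D := range_subset_iff.2 fun i => (hf i).1
  refine (eq_of_subset_of_ncard_le hsub ?_ hD).symm
  rw [ncard_range_of_injective (hS.injective_of_mem_disjoint fun i => (hf i).2), hcard]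

end Transversal

theorem IsDominating.exists_mem_of_adj_subset {V : Type*} {G : SimpleGraph V} {D S : Set V}
    (hD : IsDominating G D) {v : V} (hv : v ∈ S) (hS : ∀ u, G.Adj u v → u ∈ S) :
    ∃ u ∈ D, u ∈ S := by
  rcases hD v with hvD | ⟨u, huD, huv⟩
  · exact ⟨v, hvD, hv⟩
  · exact ⟨u, huD, hS u huv⟩

namespace PhiVtx

variable {n m : ℕ}

def lit : Fin n × Bool → PhiVtx n m
  | (i, true) => pos i
  | (i, false) => neg i

def gadget : Option (Fin n) → Set (PhiVtx n m)
  | none => {y2, y3}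
  | some i => {var i, pos i, neg i}

theorem pairwise_disjoint_gadget :
    Pairwise (Disjoint on (gadget : Option (Fin n) → Set (PhiVtx n m))) := by
  rintro (_ | i) (_ | j) hij <;> simp_all [onFun, gadget, disjoint_left]

theorem lit_mem_gadget (l : Fin n × Bool) : (lit l : PhiVtx n m) ∈ gadget (some l.1) := by
  obtain ⟨i, _ | _⟩ := l <;> simp [lit, gadget]

theorem y1_notMem_gadget (o : Option (Fin n)) : (y1 : PhiVtx n m) ∉ gadget o := by
  cases o <;> simp [gadget]

theorem cls_notMem_gadget (j : Fin m) (o : Option (Fin n)) : (cls j : PhiVtx n m) ∉ gadget o := by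
  cases o <;> simp [gadget]

theorem decide_lit_eq_pos (l : Fin n × Bool) : decide ((lit l : PhiVtx n m) = pos l.1) = l.2 := by
  obtain ⟨i, _ | _⟩ := l <;> simp [lit]

def ofAssignment (σ : Fin n → Bool) : Option (Fin n) → PhiVtx n m
  | none => y2
  | some i => lit (i, σ i)

theorem ofAssignment_mem_gadget (σ : Fin n → Bool) (o : Option (Fin n)) :
    (ofAssignment σ o : PhiVtx n m) ∈ gadget o := by
  cases o
  · simp [ofAssignment, gadget]
  · exact lit_mem_gadget _

end PhiVtx

open PhiVtx

section Construction

variable {n m : ℕ} (C : Fin m → Finset (Fin n × Bool))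

theorem phiGraph_adj_cls {u : PhiVtx n m} {j : Fin m} :
    (phiGraph C).Adj u (cls j) ↔ u = y1 ∨ ∃ l ∈ C j, u = lit l := by
  cases u <;> simp [phiGraph, phiRel, lit]

variable {C}

theorem IsDominating.exists_mem_gadget {D : Set (PhiVtx n m)} (hD : IsDominating (phiGraph C) D)
    (o : Option (Fin n)) : ∃ u ∈ D, u ∈ gadget o := by
  cases o with
  | none =>
    refine hD.exists_mem_of_adj_subset (v := y3) (by simp [gadget]) fun u hu => ?_
    cases u <;> simp_all [phiGraph, phiRel, gadget]
  | some i =>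
    refine hD.exists_mem_of_adj_subset (v := var i) (by simp [gadget]) fun u hu => ?_
    cases u <;> simp_all [phiGraph, phiRel, gadget]

theorem isDominating_range_ofAssignment {σ : Fin n → Bool}
    (hσ : ∀ j, ∃ l ∈ C j, σ l.1 = l.2) :
    IsDominating (phiGraph C) (range (ofAssignment σ : Option (Fin n) → PhiVtx n m)) := by
  have hlit : ∀ i, lit (i, σ i) ∈ range (ofAssignment σ : Option (Fin n) → PhiVtx n m) :=
    fun i => ⟨some i, rfl⟩
  have hy2 : y2 ∈ range (ofAssignment σ : Option (Fin n) → PhiVtx n m) := ⟨none, rfl⟩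
  intro v
  cases v with
  | var i => exact .inr ⟨_, hlit i, by cases σ i <;> simp [lit, phiGraph, phiRel]⟩
  | pos i =>
    cases h : σ i
    · exact .inr ⟨_, hlit i, by simp [lit, h, phiGraph, phiRel]⟩
    · exact .inl (by simpa [lit, h] using hlit i)
  | neg i =>
    cases h : σ i
    · exact .inl (by simpa [lit, h] using hlit i)
    · exact .inr ⟨_, hlit i, by simp [lit, h, phiGraph, phiRel]⟩
  | cls j =>
    obtain ⟨l, hl, hσl⟩ := hσ j
    exact .inr ⟨lit l, by simpa [hσl] using hlit l.1, (phiGraph_adj_cls C).2 (.inr ⟨l, hl, rfl⟩)⟩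
  | y1 | y3 => exact .inr ⟨y2, hy2, by simp [phiGraph, phiRel]⟩
  | y2 => exact .inl hy2

theorem clause_satisfied_of_isDominating_range {f : Option (Fin n) → PhiVtx n m}
    (hf : ∀ o, f o ∈ gadget o) (hD : IsDominating (phiGraph C) (range f)) (j : Fin m) :
    ∃ l ∈ C j, decide (f (some l.1) = pos l.1) = l.2 := by
  rcases hD (cls j) with ⟨o, ho⟩ | ⟨u, ⟨o, rfl⟩, hu⟩
  · exact absurd (ho ▸ hf o) (cls_notMem_gadget j o)
  rcases (phiGraph_adj_cls C).1 hu with hy1 | ⟨l, hl, hlit⟩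
  · exact absurd (hy1 ▸ hf o) (y1_notMem_gadget o)
  have ho : o = some l.1 := (pairwise_disjoint_gadget.pairwiseDisjoint univ).elim_set
    (mem_univ _) (mem_univ _) _ (hf o) (hlit ▸ lit_mem_gadget l)
  exact ⟨l, hl, by rw [← ho, hlit, decide_lit_eq_pos]⟩

end Construction

theorem satisfiable_iff_dominating_phiGraph_general {n m : ℕ}
    (C : Fin m → Finset (Fin n × Bool)) :
    (∃ σ : Fin n → Bool, ∀ j, ∃ l ∈ C j, σ l.1 = l.2) ↔
      (∃ D : Set (PhiVtx n m), IsDominating (phiGraph C) D ∧ D.ncard = n + 1) := by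
  constructor
  · rintro ⟨σ, hσ⟩
    refine ⟨_, isDominating_range_ofAssignment hσ, ?_⟩
    rw [ncard_range_of_injective
      (pairwise_disjoint_gadget.injective_of_mem_disjoint (ofAssignment_mem_gadget σ))]
    simp
  · rintro ⟨D, hD, hcard⟩
    choose f hfD hfS using hD.exists_mem_gadget
    obtain rfl : D = range f := eq_range_of_ncard_eq (toFinite D) pairwise_disjoint_gadget
      (fun o => ⟨hfD o, hfS o⟩) (by simpa using hcard)
    exact ⟨fun i => decide (f (some i) = pos i), clause_satisfied_of_isDominating_range hfS hD⟩

/-- A CNF formula φ with `n` variables and `m` nonempty clauses of at most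
three literals is satisfiable iff the constructed graph has a dominating set
of size `n + 1`. -/
theorem satisfiable_iff_dominating_phiGraph {n m : ℕ}
    (C : Fin m → Finset (Fin n × Bool))
    (hC : ∀ j, (C j).Nonempty ∧ (C j).card ≤ 3) :
    (∃ σ : Fin n → Bool, ∀ j, ∃ l ∈ C j, σ l.1 = l.2) ↔
      (∃ D : Set (PhiVtx n m), IsDominating (phiGraph C) D ∧ D.ncard = n + 1) :=
  satisfiable_iff_dominating_phiGraph_general C
end

section
/- Let φ be a CNF formula with variables x_1,…,x_n and clauses C_1,…,C_m (each clause a set of at most three literals), and let G be the graph constructed from φ as described. Then X := {x_1,…,x_n, y_1} is a maximal 2-independent set of G and V(G) ∖ N[X] = {y_3}. -/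
/-- A set `X` is `r`-independent if between any two distinct vertices of `X`
there is no walk of length at most `r`. -/
def rIndependent {V : Type*} (G : SimpleGraph V) (r : ℕ) (X : Set V) : Prop :=
  ∀ x ∈ X, ∀ y ∈ X, x ≠ y → ∀ p : G.Walk x y, r < p.length

/-- The closed neighbourhood `N[X]` of a set of vertices `X`. -/
def closedNbhdSet {V : Type*} (G : SimpleGraph V) (X : Set V) : Set V :=
  X ∪ ⋃ x ∈ X, G.neighborSet x

/-! The neighbourhoods of the vertices of `X` are pairwise disjoint and avoid `X` (the neighbours of
`xᵢ` are `tᵢ, fᵢ`, those of `y₁` are the clause vertices and `y₂`), so `X` is `2`-independent. They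
cover every vertex except `y₃`, which is at distance two from `y₁`; hence every vertex outside `X`
is within distance two of `X`, which makes `X` maximal. -/

open SimpleGraph

section General

variable {V : Type*} {G : SimpleGraph V}

lemma SimpleGraph.Walk.eq_or_adj_or_exists_adj_adj_of_length_le_two {x y : V} (p : G.Walk x y)
    (h : p.length ≤ 2) : x = y ∨ G.Adj x y ∨ ∃ v, G.Adj x v ∧ G.Adj v y := by
  match p with
  | .nil => exact Or.inl rfl
  | .cons hxy .nil => exact Or.inr (Or.inl hxy)
  | .cons hxv (.cons hvy .nil) => exact Or.inr (Or.inr ⟨_, hxv, hvy⟩)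
  | .cons _ (.cons _ (.cons _ _)) => simp [Walk.length_cons] at h

lemma rIndependent_two_of_disjoint_neighborSet {X : Set V}
    (hX : ∀ x ∈ X, Disjoint (G.neighborSet x) X)
    (hdisj : X.Pairwise fun x y => Disjoint (G.neighborSet x) (G.neighborSet y)) :
    rIndependent G 2 X := by
  intro x hx y hy hxy p
  by_contra! hp
  rcases p.eq_or_adj_or_exists_adj_adj_of_length_le_two hp with rfl | hadj | ⟨v, hxv, hvy⟩
  · exact hxy rfl
  · exact Set.disjoint_left.mp (hX x hx) hadj hy
  · exact Set.disjoint_left.mp (hdisj hx hy hxy) hxv hvy.symm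

lemma exists_walk_length_le_one_of_mem_closedNbhdSet {X : Set V} {v : V}
    (hv : v ∈ closedNbhdSet G X) : ∃ x ∈ X, ∃ p : G.Walk v x, p.length ≤ 1 := by
  rcases hv with hv | hv
  · exact ⟨v, hv, .nil, zero_le_one⟩
  · obtain ⟨x, hx, hxv⟩ := Set.mem_iUnion₂.mp hv
    exact ⟨x, hx, Walk.cons hxv.symm .nil, le_rfl⟩

lemma rIndependent.eq_of_subset {r : ℕ} {X Y : Set V} (hY : rIndependent G r Y) (hXY : X ⊆ Y)
    (hnear : ∀ v ∉ X, ∃ x ∈ X, ∃ p : G.Walk v x, p.length ≤ r) : Y = X := by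
  refine Set.Subset.antisymm (fun v hvY => ?_) hXY
  by_contra hvX
  obtain ⟨x, hx, p, hp⟩ := hnear v hvX
  exact (hY v hvY x (hXY hx) (ne_of_mem_of_not_mem hx hvX).symm p).not_ge hp

end General

namespace PhiVtx

def anchors (n m : ℕ) : Set (PhiVtx n m) := {v | (∃ i, v = var i) ∨ v = y1}

variable {n m : ℕ} {C : Fin m → Finset (Fin n × Bool)}

@[simp]
lemma phiGraph_adj_var_iff {i : Fin n} {w : PhiVtx n m} :
    (phiGraph C).Adj (var i) w ↔ w = pos i ∨ w = neg i := by
  cases w <;> simp [phiGraph, phiRel, eq_comm]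

@[simp]
lemma phiGraph_adj_y1_iff {w : PhiVtx n m} :
    (phiGraph C).Adj y1 w ↔ (∃ j, w = cls j) ∨ w = y2 := by
  cases w <;> simp [phiGraph, phiRel]

lemma phiGraph_adj_y2_y3 : (phiGraph C).Adj y2 y3 := by
  simp [phiGraph, phiRel]

lemma rIndependent_two_anchors : rIndependent (phiGraph C) 2 (anchors n m) := by
  refine rIndependent_two_of_disjoint_neighborSet ?_ ?_
  · rintro _ (⟨i, rfl⟩ | rfl) <;>
      simp [Set.disjoint_left, anchors, or_imp, forall_and, forall_exists_index]
  · rintro _ (⟨i, rfl⟩ | rfl) _ (⟨i', rfl⟩ | rfl) hne <;>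
      simp_all [Set.disjoint_left, eq_comm, or_imp, forall_and, forall_exists_index]

lemma compl_closedNbhdSet_anchors :
    Set.univ \ closedNbhdSet (phiGraph C) (anchors n m) = {y3} := by
  ext v
  cases v <;> simp [closedNbhdSet, anchors, or_and_right, exists_or]

lemma exists_walk_to_anchors_length_le_two {v : PhiVtx n m} (hv : v ∉ anchors n m) :
    ∃ x ∈ anchors n m, ∃ p : (phiGraph C).Walk v x, p.length ≤ 2 := by
  by_cases hN : v ∈ closedNbhdSet (phiGraph C) (anchors n m)
  · obtain ⟨x, hx, p, hp⟩ := exists_walk_length_le_one_of_mem_closedNbhdSet hN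
    exact ⟨x, hx, p, hp.trans one_le_two⟩
  · obtain rfl : v = y3 := by
      rw [← Set.mem_singleton_iff, ← compl_closedNbhdSet_anchors (C := C)]
      exact ⟨trivial, hN⟩
    have hy2 : (phiGraph C).Adj y2 y1 := (phiGraph_adj_y1_iff.mpr (.inr rfl)).symm
    exact ⟨y1, .inr rfl, .cons phiGraph_adj_y2_y3.symm (.cons hy2 .nil), le_rfl⟩

end PhiVtx

theorem phiGraph_maximal_twoIndependent_general {n m : ℕ}
    (C : Fin m → Finset (Fin n × Bool)) :
    let X : Set (PhiVtx n m) := {v | (∃ i, v = PhiVtx.var i) ∨ v = PhiVtx.y1}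
    rIndependent (phiGraph C) 2 X ∧
      (∀ Y : Set (PhiVtx n m), X ⊆ Y → rIndependent (phiGraph C) 2 Y → Y = X) ∧
      Set.univ \ closedNbhdSet (phiGraph C) X = {PhiVtx.y3} :=
  ⟨PhiVtx.rIndependent_two_anchors,
    fun _ hXY hY => hY.eq_of_subset hXY fun _ => PhiVtx.exists_walk_to_anchors_length_le_two,
    PhiVtx.compl_closedNbhdSet_anchors⟩

/-- In the graph constructed from a CNF formula (clauses of size at most 3),
the set `X = {x₁,…,xₙ, y₁}` is a maximal `2`-independent set and the residual
set `V(G) ∖ N[X]` is exactly `{y₃}`. -/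
theorem phiGraph_maximal_twoIndependent {n m : ℕ}
    (C : Fin m → Finset (Fin n × Bool)) (hC : ∀ j, (C j).card ≤ 3) :
    let X : Set (PhiVtx n m) := {v | (∃ i, v = PhiVtx.var i) ∨ v = PhiVtx.y1}
    rIndependent (phiGraph C) 2 X ∧
      (∀ Y : Set (PhiVtx n m), X ⊆ Y → rIndependent (phiGraph C) 2 Y → Y = X) ∧
      Set.univ \ closedNbhdSet (phiGraph C) X = {PhiVtx.y3} :=
  phiGraph_maximal_twoIndependent_general C
end

section
/- Let G be a finite simple graph whose vertex set is partitioned into blocks C_0, C_1, …, C_k with k ≥ 1 and C_i ≠ ∅ for all 1 ≤ i ≤ k, and let G' be the graph constructed from G as described. Then G has a colourful dominating set if and only if G' has a dominating set of size k. -/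
/-- A colourful dominating set for a graph with blocks `C 0, C 1, …, C k`:
it contains exactly one vertex from each block `C i`, `i ≥ 1` (and none from
`C 0`), and every vertex of `C 0` belongs to it or is adjacent to one of its
vertices. -/
def ColourfulDominating {V : Type*} {k : ℕ} (G : SimpleGraph V)
    (C : Fin (k + 1) → Set V) (D : Set V) : Prop :=
  (∀ i, i ≠ 0 → (D ∩ C i).ncard = 1) ∧ D ∩ C 0 = ∅ ∧
    ∀ v ∈ C 0, v ∈ D ∨ ∃ u ∈ D, G.Adj u v

/-- Base relation for the construction: keep the edges of `G`; make each block
`C i`, `i ≥ 1`, a clique; add a new vertex `aᵢ` (encoded `Sum.inr i`) adjacent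
exactly to `C i` for `i ≥ 1`; and add a new vertex `a₀` adjacent to every
vertex of `C 0 ∪ C 1 ∪ … ∪ C k`. -/
def colorRel {V : Type*} {k : ℕ} (G : SimpleGraph V) (C : Fin (k + 1) → Set V) :
    V ⊕ Fin (k + 1) → V ⊕ Fin (k + 1) → Prop
  | .inl u, .inl v => G.Adj u v ∨ ∃ i, i ≠ 0 ∧ u ∈ C i ∧ v ∈ C i
  | .inr i, .inl u => (i = 0 ∧ u ∈ ⋃ j, C j) ∨ (i ≠ 0 ∧ u ∈ C i)
  | _, _ => False

/-- The graph `G'` constructed from `G` and its blocks. -/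
def colorGraph {V : Type*} {k : ℕ} (G : SimpleGraph V)
    (C : Fin (k + 1) → Set V) : SimpleGraph (V ⊕ Fin (k + 1)) :=
  SimpleGraph.fromRel (colorRel G C)

/-! The closed neighbourhoods of the new vertices `a₁, …, a_k` of `G'` are pairwise disjoint, so
a dominating set of `G'` of size `k` has exactly one vertex in each of them and no other vertex.
Replacing each `aⱼ` in it by an arbitrary vertex of `Cⱼ` gives a colourful dominating set of `G`,
because a vertex of `C₀` is adjacent in `G'` only to `a₀` and to its neighbours in `G`.
Conversely, a colourful dominating set dominates `G'`: its vertex in `Cⱼ` dominates the clique `Cⱼ`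
together with `aⱼ` and `a₀`. -/

open Function Set Sum

section DisjointFamily

variable {α ι : Type*} {S : ι → Set α}

theorem Pairwise.elim_set (hS : Pairwise (Disjoint on S)) {i j : ι} {a : α} (hi : a ∈ S i)
    (hj : a ∈ S j) : i = j := by
  by_contra hij
  exact disjoint_left.mp (hS hij) hi hj

theorem Pairwise.injective_of_mem (hS : Pairwise (Disjoint on S)) {t : ι → α}
    (ht : ∀ i, t i ∈ S i) : Injective t :=
  fun i j hij => hS.elim_set (ht i) (hij ▸ ht j)

theorem Pairwise.range_inter_eq_singleton (hS : Pairwise (Disjoint on S)) {t : ι → α}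
    (ht : ∀ i, t i ∈ S i) (i : ι) : range t ∩ S i = {t i} := by
  refine subset_antisymm ?_ (singleton_subset_iff.mpr ⟨mem_range_self i, ht i⟩)
  rintro _ ⟨⟨j, rfl⟩, hj⟩
  rw [hS.elim_set (ht j) hj]
  rfl

theorem eq_range_of_subset_iUnion_of_inter_eq_singleton {D : Set α} {g : ι → α}
    (hD : D ⊆ ⋃ i, S i) (hg : ∀ i, D ∩ S i = {g i}) : D = range g := by
  have hgD : ∀ i, g i ∈ D ∩ S i := fun i => by rw [hg i]; rfl
  refine subset_antisymm (fun v hv => ?_) (range_subset_iff.mpr fun i => (hgD i).1)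
  obtain ⟨i, hi⟩ := mem_iUnion.mp (hD hv)
  have hvg : v ∈ D ∩ S i := ⟨hv, hi⟩
  rw [hg i] at hvg
  exact ⟨i, hvg.symm⟩

theorem Pairwise.exists_eq_range_of_ncard_le [Finite ι] (hS : Pairwise (Disjoint on S))
    {D : Set α} (hD : ∀ i, (D ∩ S i).Nonempty) (hfin : D.Finite) (hcard : D.ncard ≤ Nat.card ι) :
    ∃ t : ι → α, (∀ i, t i ∈ S i) ∧ D = range t := by
  choose t htD htS using hD
  refine ⟨t, htS, (eq_of_subset_of_ncard_le (range_subset_iff.mpr htD) ?_ hfin).symm⟩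
  rwa [ncard_range_of_injective (hS.injective_of_mem htS)]

theorem Pairwise.insert_inr_image_inl {β : Type*} {f : ι → β} (hf : Injective f)
    (hS : Pairwise (Disjoint on S)) :
    Pairwise (Disjoint on fun i => (insert (inr (f i)) (inl '' S i) : Set (α ⊕ β))) := by
  intro i j hij
  simp [onFun, hf.eq_iff, hij.symm, disjoint_image_iff inl_injective, hS hij]

end DisjointFamily

theorem IsDominating.inter_insert_neighborSet_nonempty {V : Type*} {G : SimpleGraph V}
    {D : Set V} (hD : IsDominating G D) (v : V) : (D ∩ insert v (G.neighborSet v)).Nonempty := by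
  rcases hD v with hv | ⟨u, hu, huv⟩
  · exact ⟨v, hv, mem_insert v _⟩
  · exact ⟨u, hu, mem_insert_of_mem v huv.symm⟩

section ColorGraph

variable {V : Type*} {k : ℕ} {G : SimpleGraph V} {C : Fin (k + 1) → Set V}

theorem colorGraph_adj_inl_inl {u v : V} :
    (colorGraph G C).Adj (inl u) (inl v) ↔
      u ≠ v ∧ (G.Adj u v ∨ ∃ i, i ≠ 0 ∧ u ∈ C i ∧ v ∈ C i) := by
  simp only [colorGraph, SimpleGraph.fromRel_adj, colorRel, ne_eq, inl.injEq]
  rw [G.adj_comm v u, or_congr_right (exists_congr fun _ => and_congr_right' and_comm), or_self]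

theorem colorGraph_adj_inl_inr {u : V} {i : Fin (k + 1)} :
    (colorGraph G C).Adj (inl u) (inr i) ↔ (i = 0 ∧ u ∈ ⋃ j, C j) ∨ (i ≠ 0 ∧ u ∈ C i) := by
  simp [colorGraph, colorRel]

theorem colorGraph_neighborSet_inr {i : Fin (k + 1)} (hi : i ≠ 0) :
    (colorGraph G C).neighborSet (inr i) = inl '' C i := by
  ext (u | j)
  · simp [SimpleGraph.adj_comm, colorGraph_adj_inl_inr, hi]
  · simp [colorGraph, colorRel]

theorem colorGraph_adj_inl_inl_iff_of_mem_zero (hdisj : Pairwise (Disjoint on C)) {u v : V}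
    (hv : v ∈ C 0) : (colorGraph G C).Adj (inl u) (inl v) ↔ G.Adj u v := by
  rw [colorGraph_adj_inl_inl]
  refine ⟨?_, fun h => ⟨h.ne, Or.inl h⟩⟩
  rintro ⟨-, h | ⟨i, hi, -, hvi⟩⟩
  exacts [h, absurd (hdisj.elim_set hvi hv) hi]

theorem ColourfulDominating.exists_eq_range (hcover : ⋃ i, C i = univ) {D : Set V}
    (hD : ColourfulDominating G C D) :
    ∃ g : Fin k → V, (∀ j, g j ∈ C j.succ) ∧ D = range g := by
  obtain ⟨hone, hzero, -⟩ := hD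
  choose g hg using fun j : Fin k => ncard_eq_one.mp (hone j.succ j.succ_ne_zero)
  have hgD : ∀ j, g j ∈ D ∩ C j.succ := fun j => by rw [hg j]; rfl
  refine ⟨g, fun j => (hgD j).2,
    eq_range_of_subset_iUnion_of_inter_eq_singleton (fun v hv => ?_) hg⟩
  obtain ⟨i, hi⟩ := mem_iUnion.mp (eq_univ_iff_forall.mp hcover v)
  cases i using Fin.cases with
  | zero => exact absurd (hzero ▸ ⟨hv, hi⟩ : v ∈ (∅ : Set V)) (notMem_empty v)
  | succ j => exact mem_iUnion_of_mem j hi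

theorem colourfulDominating_range_iff (hdisj : Pairwise (Disjoint on C)) {g : Fin k → V}
    (hg : ∀ j, g j ∈ C j.succ) :
    ColourfulDominating G C (range g) ↔ ∀ v ∈ C 0, ∃ j, G.Adj (g j) v := by
  have hg0 : ∀ j, g j ∉ C 0 := fun j h => j.succ_ne_zero (hdisj.elim_set (hg j) h)
  have hone : ∀ i, i ≠ 0 → (range g ∩ C i).ncard = 1 := by
    intro i hi
    cases i using Fin.cases with
    | zero => exact absurd rfl hi
    | succ j =>
      rw [(hdisj.comp_of_injective (Fin.succ_injective k)).range_inter_eq_singleton hg j,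
        ncard_singleton]
  have hzero : range g ∩ C 0 = ∅ := by
    rw [eq_empty_iff_forall_notMem]
    rintro _ ⟨⟨j, rfl⟩, h⟩
    exact hg0 j h
  refine ⟨fun hD v hv => ?_, fun h => ⟨hone, hzero, fun v hv => Or.inr ?_⟩⟩
  · rcases hD.2.2 v hv with ⟨j, rfl⟩ | ⟨_, ⟨j, rfl⟩, hj⟩
    exacts [absurd hv (hg0 j), ⟨j, hj⟩]
  · obtain ⟨j, hj⟩ := h v hv
    exact ⟨g j, mem_range_self j, hj⟩

theorem isDominating_colorGraph_range (hk : 1 ≤ k) (hcover : ⋃ i, C i = univ) {g : Fin k → V}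
    (hg : ∀ j, g j ∈ C j.succ) (hdom : ∀ v ∈ C 0, ∃ j, G.Adj (g j) v) :
    IsDominating (colorGraph G C) (range (inl ∘ g)) := by
  simp only [IsDominating, mem_range, comp_apply, exists_exists_eq_and]
  rintro (v | i)
  · obtain ⟨i, hi⟩ := mem_iUnion.mp (eq_univ_iff_forall.mp hcover v)
    cases i using Fin.cases with
    | zero =>
      obtain ⟨j, hj⟩ := hdom v hi
      exact Or.inr ⟨j, colorGraph_adj_inl_inl.mpr ⟨hj.ne, Or.inl hj⟩⟩
    | succ j =>
      by_cases hjv : g j = v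
      · exact Or.inl ⟨j, congrArg inl hjv⟩
      · exact Or.inr ⟨j, colorGraph_adj_inl_inl.mpr
          ⟨hjv, Or.inr ⟨j.succ, j.succ_ne_zero, hg j, hi⟩⟩⟩
  · refine Or.inr ?_
    cases i using Fin.cases with
    | zero =>
      exact ⟨⟨0, hk⟩, colorGraph_adj_inl_inr.mpr (Or.inl ⟨rfl, mem_iUnion_of_mem _ (hg _)⟩)⟩
    | succ j => exact ⟨j, colorGraph_adj_inl_inr.mpr (Or.inr ⟨j.succ_ne_zero, hg j⟩)⟩

theorem IsDominating.exists_eq_range_colorGraph (hk : 1 ≤ k) (hdisj : Pairwise (Disjoint on C))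
    {D : Set (V ⊕ Fin (k + 1))} (hD : IsDominating (colorGraph G C) D) (hcard : D.ncard = k) :
    ∃ t : Fin k → V ⊕ Fin (k + 1),
      (∀ j, t j ∈ insert (inr j.succ) (inl '' C j.succ)) ∧ D = range t := by
  refine ((hdisj.comp_of_injective (Fin.succ_injective k)).insert_inr_image_inl
    (Fin.succ_injective k)).exists_eq_range_of_ncard_le (fun j => ?_)
    (finite_of_ncard_pos (by omega)) (by rw [hcard, Nat.card_fin])
  rw [← colorGraph_neighborSet_inr (G := G) j.succ_ne_zero]
  exact hD.inter_insert_neighborSet_nonempty (inr j.succ)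

theorem exists_adj_of_isDominating_colorGraph_range (hdisj : Pairwise (Disjoint on C))
    {t : Fin k → V ⊕ Fin (k + 1)} (ht : ∀ j, t j ∈ insert (inr j.succ) (inl '' C j.succ))
    (hD : IsDominating (colorGraph G C) (range t)) {v : V} (hv : v ∈ C 0) :
    ∃ j u, t j = inl u ∧ G.Adj u v := by
  have hv' : ∀ j : Fin k, v ∉ C j.succ := fun j h => j.succ_ne_zero (hdisj.elim_set h hv)
  rcases hD (inl v) with ⟨j, hj⟩ | ⟨_, ⟨j, rfl⟩, hadj⟩
  · have := hj ▸ ht j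
    simp only [mem_insert_iff, reduceCtorEq, false_or, inl_injective.mem_set_image] at this
    exact absurd this (hv' j)
  · rcases ht j with h | ⟨u, -, h⟩
    · have : inl v ∈ (colorGraph G C).neighborSet (inr j.succ) := h ▸ hadj
      rw [colorGraph_neighborSet_inr j.succ_ne_zero, inl_injective.mem_set_image] at this
      exact absurd this (hv' j)
    · rw [← h, colorGraph_adj_inl_inl_iff_of_mem_zero hdisj hv] at hadj
      exact ⟨j, u, h.symm, hadj⟩

end ColorGraph

theorem colourfulDominating_iff_dominating_general {V : Type*} {k : ℕ}
    (hk : 1 ≤ k) (G : SimpleGraph V) (C : Fin (k + 1) → Set V)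
    (hdisj : ∀ i j, i ≠ j → Disjoint (C i) (C j))
    (hcover : (⋃ i, C i) = Set.univ)
    (hne : ∀ i, i ≠ 0 → (C i).Nonempty) :
    (∃ D : Set V, ColourfulDominating G C D) ↔
      (∃ D : Set (V ⊕ Fin (k + 1)),
        IsDominating (colorGraph G C) D ∧ D.ncard = k) := by
  replace hdisj : Pairwise (Disjoint on C) := hdisj
  constructor
  · rintro ⟨D, hD⟩
    obtain ⟨g, hg, rfl⟩ := hD.exists_eq_range hcover
    refine ⟨range (inl ∘ g), isDominating_colorGraph_range hk hcover hg
      ((colourfulDominating_range_iff hdisj hg).1 hD), ?_⟩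
    rw [ncard_range_of_injective (inl_injective.comp
      ((hdisj.comp_of_injective (Fin.succ_injective k)).injective_of_mem hg)), Nat.card_fin]
  · rintro ⟨D, hD, hcard⟩
    obtain ⟨t, ht, rfl⟩ := hD.exists_eq_range_colorGraph hk hdisj hcard
    have hproj : ∀ j, ∃ v ∈ C j.succ, ∀ u, t j = inl u → v = u := by
      intro j
      rcases ht j with h | ⟨u, hu, h⟩
      · obtain ⟨v, hv⟩ := hne j.succ j.succ_ne_zero
        exact ⟨v, hv, fun u hu => absurd (h.symm.trans hu) inr_ne_inl⟩
      · exact ⟨u, hu, fun u' h' => inl_injective (h.trans h')⟩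
    choose d hdC hdt using hproj
    refine ⟨range d, (colourfulDominating_range_iff hdisj hdC).2 fun v hv => ?_⟩
    obtain ⟨j, u, htj, huv⟩ := exists_adj_of_isDominating_colorGraph_range hdisj ht hD hv
    exact ⟨j, hdt j u htj ▸ huv⟩

/-- Let `G` be a finite graph whose vertex set is partitioned into blocks
`C 0, …, C k` with `k ≥ 1` and `C i ≠ ∅` for `i ≥ 1`. Then `G` has a
colourful dominating set iff the constructed graph `G'` has a dominating set
of size `k`. -/
theorem colourfulDominating_iff_dominating {V : Type*} [Fintype V] {k : ℕ}
    (hk : 1 ≤ k) (G : SimpleGraph V) (C : Fin (k + 1) → Set V)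
    (hdisj : ∀ i j, i ≠ j → Disjoint (C i) (C j))
    (hcover : (⋃ i, C i) = Set.univ)
    (hne : ∀ i, i ≠ 0 → (C i).Nonempty) :
    (∃ D : Set V, ColourfulDominating G C D) ↔
      (∃ D : Set (V ⊕ Fin (k + 1)),
        IsDominating (colorGraph G C) D ∧ D.ncard = k) :=
  colourfulDominating_iff_dominating_general hk G C hdisj hcover hne
end

section
/- Let G be a finite simple graph, X ⊆ V(G) a 4-independent set, and R := V(G) ∖ N[X] the residual set. If N^2(x) ∩ R ≠ ∅ for every x ∈ X, then |R| ≥ |X|. -/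
/-- `N²[x]`: the set of vertices at distance at most `2` from `x`. -/
def ball2 {V : Type*} (G : SimpleGraph V) (x : V) : Set V :=
  {v | ∃ p : G.Walk x v, p.length ≤ 2}

namespace rIndependent

variable {V : Type*} {G : SimpleGraph V} {X : Set V}

theorem eq_of_walk_of_walk {r s : ℕ} (hX : rIndependent G (r + s) X) {x y v : V}
    (hx : x ∈ X) (hy : y ∈ X) (p : G.Walk x v) (q : G.Walk y v)
    (hp : p.length ≤ r) (hq : q.length ≤ s) : x = y := by
  by_contra hne
  have hlong := hX x hx y hy hne (p.append q.reverse)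
  rw [SimpleGraph.Walk.length_append, SimpleGraph.Walk.length_reverse] at hlong
  omega

theorem ncard_le_of_forall_exists_walk {r : ℕ} (hX : rIndependent G (r + r) X) {T : Set V}
    (hT : T.Finite) (hreach : ∀ x ∈ X, ∃ v ∈ T, ∃ p : G.Walk x v, p.length ≤ r) :
    X.ncard ≤ T.ncard := by
  choose! f hfT hwalk using hreach
  refine Set.ncard_le_ncard_of_injOn f hfT (fun x hx y hy hxy => ?_) hT
  obtain ⟨p, hp⟩ := hwalk x hx
  obtain ⟨q, hq⟩ := hwalk y hy
  exact hX.eq_of_walk_of_walk hx hy p (q.copy rfl hxy.symm) hp (by rwa [SimpleGraph.Walk.length_copy])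

end rIndependent

/-- Let `X` be a `4`-independent set of a finite simple graph `G` and
`R = V(G) ∖ N[X]` the residual set.  If `N²(x) ∩ R ≠ ∅` for every `x ∈ X`,
then `|R| ≥ |X|`. -/
theorem residual_ge_of_fourIndependent {V : Type*} [Fintype V]
    (G : SimpleGraph V) (X : Set V) (hX : rIndependent G 4 X)
    (h : ∀ x ∈ X, ((ball2 G x \ {x}) ∩ (closedNbhdSet G X)ᶜ).Nonempty) :
    X.ncard ≤ ((closedNbhdSet G X)ᶜ).ncard := by
  refine rIndependent.ncard_le_of_forall_exists_walk (r := 2) hX (Set.toFinite _) fun x hx => ?_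
  obtain ⟨v, ⟨hball, -⟩, hres⟩ := h x hx
  exact ⟨v, hres, hball⟩
end

section
/- Let G be a finite simple graph, X ⊆ V(G) a 4-independent set, R := V(G) ∖ N[X] the residual set, and x ∈ X a vertex with N^2(x) ∩ R = ∅. Then N^2[x] = N[x] (so no vertex outside N[x] is adjacent to a vertex of N[x]) and ds(G) = ds(G − N[x]) + 1, where G − N[x] is the induced subgraph on V(G) ∖ N[x]. -/
/-- The closed neighbourhood `N[v]` of a vertex `v`. -/
def closedNbhd {V : Type*} (G : SimpleGraph V) (v : V) : Set V :=
  insert v (G.neighborSet v)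

/-- The domination number: the minimum size of a dominating set. -/
noncomputable def dsNum {V : Type*} (G : SimpleGraph V) : ℕ :=
  sInf {n | ∃ D : Set V, IsDominating G D ∧ D.ncard = n}

/-!
A vertex `v ≠ x` at distance at most two from `x` lies in `N[X]` by hypothesis; by the
independence of `X` it is neither in `X` nor adjacent to a vertex of `X` other than `x`, so it is
adjacent to `x`. Hence `N²[x] = N[x]`, i.e. no edge leaves `N[x]`. A dominating set of `G − N[x]`
together with `x` then dominates `G`; conversely, a dominating set of `G` meets `N[x]` (it must
dominate `x`), and its part outside `N[x]` still dominates `G − N[x]`.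
-/

open SimpleGraph

section

variable {V : Type*} {G : SimpleGraph V}

theorem rIndependent.mono {r s : ℕ} {X : Set V} (hrs : r ≤ s) (hX : rIndependent G s X) :
    rIndependent G r X :=
  fun x hx y hy hxy p => lt_of_le_of_lt hrs (hX x hx y hy hxy p)

theorem closedNbhd_subset_ball2 (x : V) : closedNbhd G x ⊆ ball2 G x := by
  rintro v (rfl | hxv)
  · exact ⟨Walk.nil, by simp⟩
  · exact ⟨Walk.cons (G.mem_neighborSet x v |>.mp hxv) Walk.nil, by simp⟩

theorem ball2_eq_closedNbhd_of_rIndependent {X : Set V} (hX : rIndependent G 3 X) {x : V}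
    (hx : x ∈ X) (h : (ball2 G x \ {x}) ∩ (closedNbhdSet G X)ᶜ = ∅) :
    ball2 G x = closedNbhd G x := by
  refine (Set.Subset.antisymm ?_ (closedNbhd_subset_ball2 x))
  rintro v ⟨p, hp⟩
  by_cases hvx : v = x
  · exact hvx ▸ Set.mem_insert v _
  have hvN : v ∈ closedNbhdSet G X := by
    by_contra hvR
    exact (Set.eq_empty_iff_forall_notMem.mp h) v ⟨⟨⟨p, hp⟩, hvx⟩, hvR⟩
  rcases hvN with hvX | hvN
  · exact absurd (hX x hx v hvX (Ne.symm hvx) p) (by omega)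
  obtain ⟨y, hyX, hyv⟩ := Set.mem_iUnion₂.mp hvN
  by_cases hyx : y = x
  · exact Set.mem_insert_of_mem _ (hyx ▸ hyv)
  have := hX x hx y hyX (Ne.symm hyx) (p.concat (G.adj_symm hyv))
  rw [Walk.length_concat] at this
  omega

theorem mem_closedNbhd_of_adj_of_ball2_eq {x u v : V} (hball : ball2 G x = closedNbhd G x)
    (hu : u ∈ closedNbhd G x) (huv : G.Adj u v) : v ∈ closedNbhd G x := by
  rw [← hball]
  rcases hu with rfl | hxu
  · exact ⟨Walk.cons huv Walk.nil, by simp⟩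
  · exact ⟨Walk.cons (G.mem_neighborSet x u |>.mp hxu) (Walk.cons huv Walk.nil), by simp⟩

theorem dsNum_le_ncard {D : Set V} (hD : IsDominating G D) : dsNum G ≤ D.ncard :=
  Nat.sInf_le ⟨D, hD, rfl⟩

theorem exists_isDominating_ncard_eq_dsNum (G : SimpleGraph V) :
    ∃ D : Set V, IsDominating G D ∧ D.ncard = dsNum G :=
  Nat.sInf_mem (s := {n | ∃ D : Set V, IsDominating G D ∧ D.ncard = n})
    ⟨_, Set.univ, fun _ => Or.inl trivial, rfl⟩

theorem IsDominating.insert_image_val {x : V} {D : Set ((closedNbhd G x)ᶜ : Set V)}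
    (hD : IsDominating (G.induce (closedNbhd G x)ᶜ) D) :
    IsDominating G (insert x (Subtype.val '' D)) := by
  intro v
  by_cases hv : v ∈ closedNbhd G x
  · rcases hv with rfl | hxv
    · exact Or.inl (Set.mem_insert _ _)
    · exact Or.inr ⟨x, Set.mem_insert _ _, hxv⟩
  rcases hD ⟨v, hv⟩ with hvD | ⟨u, huD, huv⟩
  · exact Or.inl (Set.mem_insert_of_mem _ ⟨_, hvD, rfl⟩)
  · exact Or.inr ⟨u, Set.mem_insert_of_mem _ ⟨u, huD, rfl⟩, huv⟩

theorem IsDominating.preimage_val {D s : Set V} (hD : IsDominating G D)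
    (hs : ∀ ⦃u v⦄, G.Adj u v → v ∈ s → u ∈ s) :
    IsDominating (G.induce s) (Subtype.val ⁻¹' D) := by
  intro v
  rcases hD v with hvD | ⟨u, huD, huv⟩
  · exact Or.inl hvD
  · exact Or.inr ⟨⟨u, hs huv v.2⟩, huD, huv⟩

variable [Finite V]

theorem dsNum_le_dsNum_induce_compl_closedNbhd_add_one (x : V) :
    dsNum G ≤ dsNum (G.induce (closedNbhd G x)ᶜ) + 1 := by
  obtain ⟨D, hD, hDcard⟩ := exists_isDominating_ncard_eq_dsNum (G.induce (closedNbhd G x)ᶜ)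
  have hx : x ∉ Subtype.val '' D := fun ⟨y, _, hyx⟩ => y.2 (by rw [hyx]; exact Set.mem_insert x _)
  calc dsNum G ≤ (insert x (Subtype.val '' D)).ncard := dsNum_le_ncard hD.insert_image_val
    _ = dsNum (G.induce (closedNbhd G x)ᶜ) + 1 := by
      rw [Set.ncard_insert_of_notMem hx, Set.ncard_image_of_injective _ Subtype.val_injective,
        hDcard]

theorem dsNum_induce_compl_closedNbhd_add_one_le {x : V}
    (hclosed : ∀ ⦃u v⦄, u ∈ closedNbhd G x → G.Adj u v → v ∈ closedNbhd G x) :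
    dsNum (G.induce (closedNbhd G x)ᶜ) + 1 ≤ dsNum G := by
  obtain ⟨D, hD, hDcard⟩ := exists_isDominating_ncard_eq_dsNum G
  obtain ⟨w, hwD, hwx⟩ : ∃ w ∈ D, w ∈ closedNbhd G x := by
    rcases hD x with hxD | ⟨u, huD, hux⟩
    · exact ⟨x, hxD, Set.mem_insert x _⟩
    · exact ⟨u, huD, hclosed (Set.mem_insert x _) (G.adj_symm hux)⟩
  have hrestrict : IsDominating (G.induce (closedNbhd G x)ᶜ) (Subtype.val ⁻¹' D) :=
    hD.preimage_val fun u v huv hv hu => hv (hclosed hu huv)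
  have hlt : (closedNbhd G x)ᶜ ∩ D ⊂ D :=
    Set.ssubset_iff_exists.mpr ⟨Set.inter_subset_right, w, hwD, fun hw => hw.1 hwx⟩
  calc dsNum (G.induce (closedNbhd G x)ᶜ) + 1 ≤ (Subtype.val ⁻¹' D).ncard + 1 := by
        gcongr; exact dsNum_le_ncard hrestrict
    _ = ((closedNbhd G x)ᶜ ∩ D).ncard + 1 := by
        rw [← Subtype.image_preimage_coe, Set.ncard_image_of_injective _ Subtype.val_injective]
    _ ≤ dsNum G := hDcard ▸ Set.ncard_lt_ncard hlt

theorem dsNum_eq_dsNum_induce_compl_closedNbhd_add_one {x : V}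
    (hclosed : ∀ ⦃u v⦄, u ∈ closedNbhd G x → G.Adj u v → v ∈ closedNbhd G x) :
    dsNum G = dsNum (G.induce (closedNbhd G x)ᶜ) + 1 :=
  le_antisymm (dsNum_le_dsNum_induce_compl_closedNbhd_add_one x)
    (dsNum_induce_compl_closedNbhd_add_one_le hclosed)

end

/-- Let `X` be a `4`-independent set of a finite simple graph `G`, `R` the
residual set, and `x ∈ X` a vertex with `N²(x) ∩ R = ∅`.  Then
`N²[x] = N[x]` and `ds(G) = ds(G − N[x]) + 1`, where `G − N[x]` is the
subgraph induced on `V(G) ∖ N[x]`. -/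
theorem dsNum_remove_closedNbhd {V : Type*} [Fintype V]
    (G : SimpleGraph V) (X : Set V) (hX : rIndependent G 4 X)
    (x : V) (hx : x ∈ X)
    (h : (ball2 G x \ {x}) ∩ (closedNbhdSet G X)ᶜ = ∅) :
    ball2 G x = closedNbhd G x ∧
      dsNum G = dsNum (G.induce (closedNbhd G x)ᶜ) + 1 := by
  have hball : ball2 G x = closedNbhd G x :=
    ball2_eq_closedNbhd_of_rIndependent (hX.mono (by norm_num)) hx h
  exact ⟨hball, dsNum_eq_dsNum_induce_compl_closedNbhd_add_one
    fun _ _ => mem_closedNbhd_of_adj_of_ball2_eq hball⟩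
end

section
/- Let G be a finite simple graph, X ⊆ V(G) a 3-independent set, R := V(G) ∖ N[X] the residual set, x ∈ X, H := G[N^2[x]] the subgraph induced on N^2[x], and R' := N^2[x] ∩ R. Then for all A, B ⊆ R' there exists an (A,B)-dominator of (H, R') of size at most |A| + |B| + 1. -/
/-- `D` is an `(A,B)`-dominator of the boundaried graph `(H, R')`:
`D ∩ R' = A` and every vertex of `(V(H) ∖ R') ∪ B` is in `D` or adjacent to a
vertex of `D`. -/
def IsABDominator {W : Type*} (H : SimpleGraph W) (R' A B D : Set W) : Prop :=
  D ∩ R' = A ∧ ∀ v, (v ∉ R' ∨ v ∈ B) → v ∈ D ∨ ∃ u ∈ D, H.Adj u v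

/-!
Every vertex of `N²[x]` outside the residual set lies in `N[x]`: a vertex at distance at most 2
from `x` that is in, or adjacent to, another vertex of `X` would give a walk of length at most 3
between two vertices of `X`. So `x` alone dominates `N²[x] ∖ R'`. Every `b ∈ B` is at distance
exactly 2 from `x`, so it has a neighbour in `N(x) ⊆ N[X]`; adding one such neighbour per `b ∈ B`
to `A ∪ {x}` keeps the intersection with `R'` equal to `A`.
-/

namespace SimpleGraph

variable {V : Type*} {G : SimpleGraph V}

lemma mem_ball2_self (x : V) : x ∈ ball2 G x := ⟨.nil, by simp⟩

lemma mem_ball2_of_adj {x m : V} (h : G.Adj x m) : m ∈ ball2 G x :=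
  ⟨.cons h .nil, by simp⟩

lemma mem_closedNbhdSet_of_mem {X : Set V} {x : V} (hx : x ∈ X) : x ∈ closedNbhdSet G X :=
  Or.inl hx

lemma mem_closedNbhdSet_of_adj {X : Set V} {x v : V} (hx : x ∈ X) (h : G.Adj x v) :
    v ∈ closedNbhdSet G X :=
  Or.inr (Set.mem_biUnion hx h)

lemma exists_adj_adj_of_mem_ball2 {x b : V} (hb : b ∈ ball2 G x) (hbx : b ≠ x)
    (hnadj : ¬G.Adj x b) : ∃ m, G.Adj x m ∧ G.Adj m b := by
  obtain ⟨p, hp⟩ := hb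
  match p, hp with
  | .nil, _ => exact absurd rfl hbx
  | .cons h .nil, _ => exact absurd h hnadj
  | .cons h₁ (.cons h₂ .nil), _ => exact ⟨_, h₁, h₂⟩
  | .cons _ (.cons _ (.cons _ _)), hp => simp at hp

lemma eq_or_adj_of_mem_ball2_of_mem_closedNbhdSet {X : Set V} (hX : rIndependent G 3 X)
    {x v : V} (hx : x ∈ X) (hv : v ∈ ball2 G x) (hvX : v ∈ closedNbhdSet G X) :
    v = x ∨ G.Adj x v := by
  obtain ⟨p, hp⟩ := hv
  rcases hvX with hvX | hvX
  · by_contra! hne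
    have := hX x hx v hvX hne.1.symm p
    omega
  · obtain ⟨y, hy, hyv⟩ := Set.mem_iUnion₂.mp hvX
    obtain rfl | hyx := eq_or_ne y x
    · exact Or.inr hyv
    · have := hX x hx y hy hyx.symm (p.concat hyv.symm)
      rw [Walk.length_concat] at this
      omega

lemma exists_isABDominator_ncard_le {W : Type*} [Finite W] (H : SimpleGraph W)
    {R' A : Set W} (B : Set W) (hA : A ⊆ R') {c : W} (hc : c ∉ R')
    (hc_dom : ∀ v ∉ R', v = c ∨ H.Adj c v) (hB : ∀ b ∈ B, ∃ m ∉ R', H.Adj m b) :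
    ∃ D, IsABDominator H R' A B D ∧ D.ncard ≤ A.ncard + B.ncard + 1 := by
  classical
  choose! mid hmid_notMem hmid_adj using hB
  refine ⟨insert c (A ∪ mid '' B), ⟨?_, ?_⟩, ?_⟩
  · ext v
    simp only [Set.mem_inter_iff, Set.mem_insert_iff, Set.mem_union, Set.mem_image]
    constructor
    · rintro ⟨rfl | hvA | ⟨b, hb, rfl⟩, hv⟩
      · exact absurd hv hc
      · exact hvA
      · exact absurd hv (hmid_notMem b hb)
    · exact fun hvA => ⟨Or.inr (Or.inl hvA), hA hvA⟩
  · rintro v (hv | hv)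
    · rcases hc_dom v hv with rfl | hcv
      · exact Or.inl (Set.mem_insert _ _)
      · exact Or.inr ⟨c, Set.mem_insert _ _, hcv⟩
    · exact Or.inr ⟨mid v, Or.inr (Or.inr ⟨v, hv, rfl⟩), hmid_adj v hv⟩
  · calc (insert c (A ∪ mid '' B)).ncard
        ≤ (A ∪ mid '' B).ncard + 1 := Set.ncard_insert_le _ _
      _ ≤ A.ncard + (mid '' B).ncard + 1 := by grw [Set.ncard_union_le]
      _ ≤ A.ncard + B.ncard + 1 := by grw [Set.ncard_image_le B.toFinite]

end SimpleGraph

open SimpleGraph in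
/-- Let `X` be a `3`-independent set of a finite simple graph `G`, `R` the
residual set, `x ∈ X`, `H = G[N²[x]]` and `R' = N²[x] ∩ R`.  Then for all
`A, B ⊆ R'` there is an `(A,B)`-dominator of `(H, R')` of size at most
`|A| + |B| + 1`. -/
theorem exists_small_ABdominator {V : Type*} [Fintype V]
    (G : SimpleGraph V) (X : Set V) (hX : rIndependent G 3 X)
    (x : V) (hx : x ∈ X)
    (A B : Set ↥(ball2 G x))
    (hA : A ⊆ Subtype.val ⁻¹' (closedNbhdSet G X)ᶜ)
    (hB : B ⊆ Subtype.val ⁻¹' (closedNbhdSet G X)ᶜ) :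
    ∃ D : Set ↥(ball2 G x),
      IsABDominator (G.induce (ball2 G x))
        (Subtype.val ⁻¹' (closedNbhdSet G X)ᶜ) A B D ∧
      D.ncard ≤ A.ncard + B.ncard + 1 := by
  refine (G.induce (ball2 G x)).exists_isABDominator_ncard_le B hA (c := ⟨x, mem_ball2_self x⟩)
    (by simpa using mem_closedNbhdSet_of_mem hx) ?_ ?_
  · intro v hv
    simp only [Set.mem_preimage, Set.mem_compl_iff, not_not] at hv
    exact (eq_or_adj_of_mem_ball2_of_mem_closedNbhdSet hX hx v.2 hv).imp Subtype.ext id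
  · intro b hb
    have hbR : b.val ∉ closedNbhdSet G X := hB hb
    obtain ⟨m, hxm, hmb⟩ := exists_adj_adj_of_mem_ball2 b.2
      (fun h => hbR (by rw [h]; exact mem_closedNbhdSet_of_mem hx))
      (fun h => hbR (mem_closedNbhdSet_of_adj hx h))
    exact ⟨⟨m, mem_ball2_of_adj hxm⟩, by simpa using mem_closedNbhdSet_of_adj hx hxm, hmb⟩
end

section
/- Let H be a finite simple graph, S ⊆ V(H), R' ⊆ S, and x ∈ S ∖ R' such that Y := V(H) ∖ S is an independent set, every vertex of Y is adjacent to x, and every neighbour of a vertex of Y lies in S. Partition Y into twin classes Y_1,…,Y_t (maximal subsets of Y whose vertices have identical neighbourhoods in H), for each class keep min(2, |Y_i|) of its vertices to obtain Y' ⊆ Y, and let H' := H[S ∪ Y'] be the induced subgraph. Then for all A, B ⊆ R', the minimum size of an (A,B)-dominator of (H, R') equals the minimum size of an (A,B)-dominator of (H', R'). -/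
/-!
The vertices of `Y = V(H) ∖ S` lie off the boundary, so inside a dominator any of them can be
replaced by a twin. Hence a dominator of `H` becomes one of `H'` of no larger size by moving each
of its vertices in `Y ∖ Y'` onto a kept twin. Conversely, let `D` be a dominator of `H'`. If `D`
contains two distinct twins from `Y'`, trade one of them for `x`, which dominates all of `Y`.
Otherwise every discarded vertex `v` of `Y` has two kept twins, one of which is not in `D`; it is
dominated by a neighbour in `D`, which is then a neighbour of `v` as well.
-/

open Set

section

variable {α W : Type*}

theorem Set.exists_ne_of_ncard_eq_min_two {s t : Set α} (hs : s.Finite) (hts : t ⊆ s)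
    (h : t.ncard = min 2 s.ncard) {y : α} (hys : y ∈ s) (hyt : y ∉ t) :
    ∃ a ∈ t, ∃ b ∈ t, a ≠ b := by
  have htwo : t.ncard = 2 := by
    by_contra hne
    have hts' : t = s := eq_of_subset_of_ncard_le hts (by omega) hs
    exact hyt (hts' ▸ hys)
  obtain ⟨a, b, hab, rfl⟩ := ncard_eq_two.mp htwo
  exact ⟨a, mem_insert a {b}, b, mem_insert_of_mem a rfl, hab⟩

theorem SimpleGraph.exists_ne_twins_of_ncard_eq_min_two [Finite W] (H : SimpleGraph W)
    {Y Y' : Set W} (hY'Y : Y' ⊆ Y)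
    (hY' : ∀ y ∈ Y, ({z ∈ Y' | H.neighborSet z = H.neighborSet y}).ncard =
      min 2 ({z ∈ Y | H.neighborSet z = H.neighborSet y}).ncard)
    {v : W} (hvY : v ∈ Y) (hvY' : v ∉ Y') :
    ∃ z₁ ∈ Y', ∃ z₂ ∈ Y', z₁ ≠ z₂ ∧
      H.neighborSet z₁ = H.neighborSet v ∧ H.neighborSet z₂ = H.neighborSet v := by
  have hsub : {z ∈ Y' | H.neighborSet z = H.neighborSet v} ⊆
      {z ∈ Y | H.neighborSet z = H.neighborSet v} := fun z hz => ⟨hY'Y hz.1, hz.2⟩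
  obtain ⟨z₁, ⟨hz₁Y', hz₁v⟩, z₂, ⟨hz₂Y', hz₂v⟩, hz₁₂⟩ :=
    exists_ne_of_ncard_eq_min_two (toFinite _) hsub (hY' v hvY) ⟨hvY, rfl⟩ fun h => hvY' h.1
  exact ⟨z₁, hz₁Y', z₂, hz₂Y', hz₁₂, hz₁v, hz₂v⟩

def IsABDominatorOn (H : SimpleGraph W) (R' A B D T : Set W) : Prop :=
  D ∩ R' = A ∧ ∀ v ∈ T, (v ∉ R' ∨ v ∈ B) → v ∈ D ∨ ∃ u ∈ D, H.Adj u v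

variable {H : SimpleGraph W} {R' A B D U T : Set W}

theorem IsABDominatorOn.mono (hD : IsABDominatorOn H R' A B D U) (hTU : T ⊆ U) :
    IsABDominatorOn H R' A B D T :=
  ⟨hD.1, fun v hv => hD.2 v (hTU hv)⟩

theorem isABDominator_induce_preimage_iff (hDU : D ⊆ U) (hAU : A ⊆ U) :
    IsABDominator (H.induce U) (Subtype.val ⁻¹' R') (Subtype.val ⁻¹' A) (Subtype.val ⁻¹' B)
        (Subtype.val ⁻¹' D) ↔ IsABDominatorOn H R' A B D U := by
  have hboundary : Subtype.val ⁻¹' D ∩ Subtype.val ⁻¹' R' = (Subtype.val ⁻¹' A : Set U) ↔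
      D ∩ R' = A := by
    rw [← preimage_inter, Subtype.preimage_coe_eq_preimage_coe_iff,
      inter_eq_right.mpr (inter_subset_left.trans hDU), inter_eq_right.mpr hAU]
  have hnbr (v : W) : (∃ u : U, (u : W) ∈ D ∧ H.Adj u v) ↔ ∃ u ∈ D, H.Adj u v :=
    ⟨fun ⟨u, hu, huv⟩ => ⟨u, hu, huv⟩, fun ⟨u, hu, huv⟩ => ⟨⟨u, hDU hu⟩, hu, huv⟩⟩
  simp only [IsABDominator, IsABDominatorOn, hboundary, Subtype.forall, mem_preimage,
    SimpleGraph.induce_adj, hnbr]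

theorem IsABDominator.exists_induce_ncard_le [Finite W] (hD : IsABDominator H R' A B D)
    (hR'U : R' ⊆ U)
    (hrepr : ∀ u ∉ U, ∃ z ∈ U \ R', H.neighborSet z = H.neighborSet u) :
    ∃ D' : Set U, IsABDominator (H.induce U) (Subtype.val ⁻¹' R') (Subtype.val ⁻¹' A)
      (Subtype.val ⁻¹' B) D' ∧ D'.ncard ≤ D.ncard := by
  classical
  choose! f hfU hfN using hrepr
  set g : W → W := fun w => if w ∈ U then w else f w
  have hgU (w : W) : g w ∈ U := by
    by_cases hw : w ∈ U
    · simp [g, hw]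
    · simpa [g, hw] using (hfU w hw).1
  have hgR (w : W) (hw : g w ∈ R') : g w = w := by
    by_contra hne
    have hwU : w ∉ U := fun hwU => hne (if_pos hwU)
    exact (hfU w hwU).2 (by simpa [g, hwU] using hw)
  have hgN (w : W) : H.neighborSet (g w) = H.neighborSet w := by
    by_cases hw : w ∈ U
    · simp [g, hw]
    · simpa [g, hw] using hfN w hw
  have hAU : A ⊆ U := hD.1 ▸ inter_subset_right.trans hR'U
  have hgD : IsABDominatorOn H R' A B (g '' D) U := by
    refine ⟨?_, fun v _ hv => ?_⟩
    · ext a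
      constructor
      · rintro ⟨⟨w, hwD, hwa⟩, haR'⟩
        have hwa' : w = a := (hgR w (hwa ▸ haR')).symm.trans hwa
        exact hD.1 ▸ ⟨hwa' ▸ hwD, hwa' ▸ haR'⟩
      · intro ha
        obtain ⟨haD, haR'⟩ : a ∈ D ∩ R' := hD.1.symm ▸ ha
        exact ⟨⟨a, haD, if_pos (hR'U haR')⟩, haR'⟩
    · rcases hD.2 v hv with hvD | ⟨u, huD, huv⟩
      · exact Or.inl ⟨v, hvD, if_pos ‹v ∈ U›⟩
      · exact Or.inr ⟨g u, mem_image_of_mem g huD,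
          show v ∈ H.neighborSet (g u) from hgN u ▸ huv⟩
  have hgDU : g '' D ⊆ U := image_subset_iff.mpr fun w _ => hgU w
  refine ⟨_, (isABDominator_induce_preimage_iff hgDU hAU).2 hgD, ?_⟩
  rw [ncard_preimage_of_injective_subset_range Subtype.val_injective (by rwa [Subtype.range_coe])]
  exact ncard_image_le (toFinite D)

theorem IsABDominatorOn.isABDominator_insert_diff {x z₁ z₂ : W}
    (hD : IsABDominatorOn H R' A B D T) (hxR' : x ∉ R') (hx : ∀ v ∉ T, H.Adj x v)
    (hz₁ : z₁ ∈ D) (hz₁₂ : z₁ ≠ z₂) (hz₂T : z₂ ∉ T) (hz₂R' : z₂ ∉ R')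
    (htwin : H.neighborSet z₁ = H.neighborSet z₂) :
    IsABDominator H R' A B (insert x (D \ {z₂})) := by
  refine ⟨?_, fun v hv => ?_⟩
  · rw [insert_inter_of_notMem hxR', sdiff_inter_right_comm,
      sdiff_singleton_eq_self fun h => hz₂R' h.2, hD.1]
  by_cases hvT : v ∈ T
  · rcases hD.2 v hvT hv with hvD | ⟨u, huD, huv⟩
    · exact Or.inl (mem_insert_of_mem x ⟨hvD, fun h => hz₂T (h ▸ hvT)⟩)
    · by_cases huz : u = z₂
      · subst huz
        exact Or.inr ⟨z₁, mem_insert_of_mem x ⟨hz₁, hz₁₂⟩,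
          show v ∈ H.neighborSet z₁ from htwin ▸ huv⟩
      · exact Or.inr ⟨u, mem_insert_of_mem x ⟨huD, huz⟩, huv⟩
  · exact Or.inr ⟨x, mem_insert x _, hx v hvT⟩

theorem IsABDominatorOn.isABDominator_of_twin (hD : IsABDominatorOn H R' A B D U)
    (htwin : ∀ v ∉ U, ∃ z ∈ U \ R', z ∉ D ∧ H.neighborSet z = H.neighborSet v) :
    IsABDominator H R' A B D := by
  refine ⟨hD.1, fun v hv => ?_⟩
  by_cases hvU : v ∈ U
  · exact hD.2 v hvU hv
  obtain ⟨z, ⟨hzU, hzR'⟩, hzD, hzv⟩ := htwin v hvU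
  rcases hD.2 z hzU (Or.inl hzR') with hzD' | ⟨u, huD, huz⟩
  · exact absurd hzD' hzD
  · exact Or.inr ⟨u, huD, (show u ∈ H.neighborSet v from hzv ▸ huz.symm).symm⟩

theorem IsABDominatorOn.exists_isABDominator_ncard_le [Finite W] {S : Set W} {x : W}
    (hD : IsABDominatorOn H R' A B D U) (hSU : S ⊆ U) (hR'S : R' ⊆ S) (hxR' : x ∉ R')
    (hx : ∀ v ∉ S, H.Adj x v)
    (htwins : ∀ v ∉ U, ∃ z₁ ∈ U \ S, ∃ z₂ ∈ U \ S, z₁ ≠ z₂ ∧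
      H.neighborSet z₁ = H.neighborSet v ∧ H.neighborSet z₂ = H.neighborSet v) :
    ∃ D₁, IsABDominator H R' A B D₁ ∧ D₁.ncard ≤ D.ncard := by
  by_cases htwinD : ∃ z₁ ∈ D, ∃ z₂ ∈ D \ S, z₁ ≠ z₂ ∧ H.neighborSet z₁ = H.neighborSet z₂
  · obtain ⟨z₁, hz₁, z₂, ⟨hz₂D, hz₂S⟩, hz₁₂, htwin⟩ := htwinD
    refine ⟨_, (hD.mono hSU).isABDominator_insert_diff hxR' hx hz₁ hz₁₂ hz₂S
      (fun h => hz₂S (hR'S h)) htwin, ?_⟩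
    calc (insert x (D \ {z₂})).ncard ≤ (D \ {z₂}).ncard + 1 := ncard_insert_le _ _
      _ = D.ncard := ncard_sdiff_singleton_add_one hz₂D
  · refine ⟨D, hD.isABDominator_of_twin fun v hv => ?_, le_rfl⟩
    obtain ⟨z₁, ⟨hz₁U, hz₁S⟩, z₂, ⟨hz₂U, hz₂S⟩, hz₁₂, hz₁v, hz₂v⟩ := htwins v hv
    by_cases hz₁D : z₁ ∈ D
    · refine ⟨z₂, ⟨hz₂U, fun h => hz₂S (hR'S h)⟩, fun hz₂D => ?_, hz₂v⟩
      exact htwinD ⟨z₁, hz₁D, z₂, ⟨hz₂D, hz₂S⟩, hz₁₂, hz₁v.trans hz₂v.symm⟩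
    · exact ⟨z₁, ⟨hz₁U, fun h => hz₁S (hR'S h)⟩, hz₁D, hz₁v⟩

end

theorem twin_reduction_ABdominator_general {W : Type*} [Fintype W]
    (H : SimpleGraph W) (S R' : Set W) (hR'S : R' ⊆ S)
    (x : W) (hxR' : x ∉ R')
    (hadj : ∀ y ∈ Sᶜ, H.Adj x y)
    (Y' : Set W) (hY'sub : Y' ⊆ Sᶜ)
    (hY' : ∀ y ∈ Sᶜ,
      ({z ∈ Y' | H.neighborSet z = H.neighborSet y}).ncard =
        min 2 ({z ∈ Sᶜ | H.neighborSet z = H.neighborSet y}).ncard)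
    (A B : Set W) (hA : A ⊆ R') :
    sInf {n | ∃ D : Set W, IsABDominator H R' A B D ∧ D.ncard = n} =
      sInf {n | ∃ D : Set ↥(S ∪ Y'),
        IsABDominator (H.induce (S ∪ Y')) (Subtype.val ⁻¹' R')
          (Subtype.val ⁻¹' A) (Subtype.val ⁻¹' B) D ∧ D.ncard = n} := by
  have hSU : S ⊆ S ∪ Y' := subset_union_left
  have htwins : ∀ v ∉ S ∪ Y', ∃ z₁ ∈ (S ∪ Y') \ S, ∃ z₂ ∈ (S ∪ Y') \ S, z₁ ≠ z₂ ∧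
      H.neighborSet z₁ = H.neighborSet v ∧ H.neighborSet z₂ = H.neighborSet v := by
    intro v hv
    have hvS : v ∈ Sᶜ := fun h => hv (Or.inl h)
    obtain ⟨z₁, hz₁Y', z₂, hz₂Y', hz₁₂, hz₁v, hz₂v⟩ :=
      H.exists_ne_twins_of_ncard_eq_min_two hY'sub hY' hvS fun h => hv (Or.inr h)
    exact ⟨z₁, ⟨Or.inr hz₁Y', hY'sub hz₁Y'⟩, z₂, ⟨Or.inr hz₂Y', hY'sub hz₂Y'⟩, hz₁₂, hz₁v, hz₂v⟩
  apply csInf_eq_csInf_of_forall_exists_le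
  · rintro _ ⟨D, hD, rfl⟩
    obtain ⟨D', hD', hcard⟩ := hD.exists_induce_ncard_le (hR'S.trans hSU) fun v hv => by
      obtain ⟨z, ⟨hzU, hzS⟩, -, -, -, hzv, -⟩ := htwins v hv
      exact ⟨z, ⟨hzU, fun h => hzS (hR'S h)⟩, hzv⟩
    exact ⟨_, ⟨D', hD', rfl⟩, hcard⟩
  · rintro _ ⟨D', hD', rfl⟩
    have hD : IsABDominatorOn H R' A B (Subtype.val '' D') (S ∪ Y') := by
      rwa [← isABDominator_induce_preimage_iff image_val_subset (hA.trans (hR'S.trans hSU)),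
        preimage_image_eq _ Subtype.val_injective]
    obtain ⟨D, hD, hcard⟩ := hD.exists_isABDominator_ncard_le hSU hR'S hxR' hadj htwins
    exact ⟨_, ⟨D, hD, rfl⟩, hcard.trans (ncard_image_of_injective _ Subtype.val_injective).le⟩

/-- Twin reduction: let `H` be a finite graph, `S ⊆ V(H)`, `R' ⊆ S` and
`x ∈ S ∖ R'` such that `Y = V(H) ∖ S` is independent, every vertex of `Y` is
adjacent to `x`, and all neighbours of `Y`-vertices lie in `S`.  Let
`Y' ⊆ Y` keep exactly `min(2, |Yᵢ|)` vertices of each twin class `Yᵢ` of `Y`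
(a twin class being a maximal set of vertices of `Y` with identical
neighbourhoods), and set `H' = H[S ∪ Y']`.  Then for all `A, B ⊆ R'` the
minimum size of an `(A,B)`-dominator of `(H, R')` equals the minimum size of
an `(A,B)`-dominator of `(H', R')`. -/
theorem twin_reduction_ABdominator {W : Type*} [Fintype W]
    (H : SimpleGraph W) (S R' : Set W) (hR'S : R' ⊆ S)
    (x : W) (hxS : x ∈ S) (hxR' : x ∉ R')
    (hind : ∀ y ∈ Sᶜ, ∀ z ∈ Sᶜ, ¬H.Adj y z)
    (hadj : ∀ y ∈ Sᶜ, H.Adj x y)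
    (hnbr : ∀ y ∈ Sᶜ, ∀ z, H.Adj y z → z ∈ S)
    (Y' : Set W) (hY'sub : Y' ⊆ Sᶜ)
    (hY' : ∀ y ∈ Sᶜ,
      ({z ∈ Y' | H.neighborSet z = H.neighborSet y}).ncard =
        min 2 ({z ∈ Sᶜ | H.neighborSet z = H.neighborSet y}).ncard)
    (A B : Set W) (hA : A ⊆ R') (hB : B ⊆ R') :
    sInf {n | ∃ D : Set W, IsABDominator H R' A B D ∧ D.ncard = n} =
      sInf {n | ∃ D : Set ↥(S ∪ Y'),
        IsABDominator (H.induce (S ∪ Y')) (Subtype.val ⁻¹' R')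
          (Subtype.val ⁻¹' A) (Subtype.val ⁻¹' B) D ∧ D.ncard = n} :=
  twin_reduction_ABdominator_general H S R' hR'S x hxR' hadj Y' hY'sub hY' A B hA
end

section
/- Let G be a finite simple graph, X ⊆ V(G) a 3-independent set, R := V(G) ∖ N[X] the residual set, and X' ⊆ X a subset such that N^2(x) ∩ R = R' for every x ∈ X' (the same set R' for all of them). Then for every dominating set D of G there exists a dominating set D' of G with |D'| ≤ |D| such that D' ∩ N[x] = {x} for all but at most |R'| vertices x ∈ X'. -/
/-!
Fix for every vertex `v` a dominator `d v ∈ D ∩ N[v]`, and call `x ∈ X'` free if `N[x]` contains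
no `d r` with `r ∈ R'`. Replace `D` by `D' := (D ∖ ⋃_{x free} N[x]) ∪ {free x}`. Since the closed
neighbourhoods of vertices of `X` are pairwise disjoint, each free `x` is paid for by the dominator
`d x ∈ N[x]` that is removed, so `|D'| ≤ |D|`, and `D' ∩ N[x] = {x}` for every free `x`. A vertex
`v` whose dominator was removed lies in `N²[x]` for a free `x`; by 3-independence `N²[x] ∖ N[x]`
avoids `N[X]`, so `v ∈ N[x]` (and `x ∈ D'` dominates it) or `v ∈ R'`, which freeness excludes.
Finally a non-free `x` has some `d r`, `r ∈ R'`, in `N[x]`, and by disjointness distinct such `x`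
use distinct `d r`, so there are at most `|R'|` of them.
-/

open SimpleGraph

section

variable {V : Type*} {G : SimpleGraph V}

lemma mem_closedNbhd_self (v : V) : v ∈ closedNbhd G v := Set.mem_insert v _

lemma mem_closedNbhd_comm {u v : V} : u ∈ closedNbhd G v ↔ v ∈ closedNbhd G u := by
  simp only [closedNbhd, Set.mem_insert_iff, mem_neighborSet, eq_comm (a := u), G.adj_comm]

lemma exists_walk_length_le_one_of_mem_closedNbhd {x v : V} (h : v ∈ closedNbhd G x) :
    ∃ p : G.Walk x v, p.length ≤ 1 := by
  rcases h with rfl | hadj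
  · exact ⟨.nil, by simp⟩
  · exact ⟨(show G.Adj x v from hadj).toWalk, by simp⟩

lemma mem_ball2_of_mem_closedNbhd {x u v : V} (hu : u ∈ closedNbhd G x)
    (hv : v ∈ closedNbhd G u) : v ∈ ball2 G x := by
  obtain ⟨p, hp⟩ := exists_walk_length_le_one_of_mem_closedNbhd hu
  obtain ⟨q, hq⟩ := exists_walk_length_le_one_of_mem_closedNbhd hv
  exact ⟨p.append q, by rw [Walk.length_append]; omega⟩

lemma mem_closedNbhdSet_iff {X : Set V} {v : V} :
    v ∈ closedNbhdSet G X ↔ ∃ y ∈ X, v ∈ closedNbhd G y := by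
  simp only [closedNbhdSet, closedNbhd, Set.mem_union, Set.mem_iUnion, Set.mem_insert_iff,
    exists_prop]
  constructor
  · rintro (hv | ⟨y, hy, hadj⟩)
    exacts [⟨v, hv, .inl rfl⟩, ⟨y, hy, .inr hadj⟩]
  · rintro ⟨y, hy, rfl | hadj⟩
    exacts [.inl hy, .inr ⟨y, hy, hadj⟩]

lemma isDominating_iff {D : Set V} : IsDominating G D ↔ ∀ v, ∃ u ∈ D, u ∈ closedNbhd G v := by
  refine forall_congr' fun v => ⟨?_, ?_⟩
  · rintro (hv | ⟨u, hu, hadj⟩)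
    exacts [⟨v, hv, mem_closedNbhd_self v⟩, ⟨u, hu, .inr hadj.symm⟩]
  · rintro ⟨u, hu, rfl | hadj⟩
    exacts [.inl hu, .inr ⟨u, hu, hadj.symm⟩]

namespace rIndependent

variable {X : Set V}

lemma mono_s15 {r s : ℕ} (hX : rIndependent G s X) (hrs : r ≤ s) : rIndependent G r X :=
  fun x hx y hy hxy p => lt_of_le_of_lt hrs (hX x hx y hy hxy p)

lemma eq_of_mem_closedNbhd (hX : rIndependent G 2 X) {x y v : V} (hx : x ∈ X) (hy : y ∈ X)
    (hvx : v ∈ closedNbhd G x) (hvy : v ∈ closedNbhd G y) : x = y := by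
  by_contra hxy
  obtain ⟨p, hp⟩ := exists_walk_length_le_one_of_mem_closedNbhd hvx
  obtain ⟨q, hq⟩ := exists_walk_length_le_one_of_mem_closedNbhd hvy
  have := hX x hx y hy hxy (p.append q.reverse)
  rw [Walk.length_append, Walk.length_reverse] at this
  omega

lemma eq_of_mem_ball2_of_mem_closedNbhd (hX : rIndependent G 3 X) {x y v : V} (hx : x ∈ X)
    (hy : y ∈ X) (hvx : v ∈ ball2 G x) (hvy : v ∈ closedNbhd G y) : x = y := by
  by_contra hxy
  obtain ⟨p, hp⟩ := hvx
  obtain ⟨q, hq⟩ := exists_walk_length_le_one_of_mem_closedNbhd hvy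
  have := hX x hx y hy hxy (p.append q.reverse)
  rw [Walk.length_append, Walk.length_reverse] at this
  omega

lemma mem_closedNbhd_or_mem_residual (hX : rIndependent G 3 X) {x v : V} (hx : x ∈ X)
    (hv : v ∈ ball2 G x) :
    v ∈ closedNbhd G x ∨ v ∈ (ball2 G x \ {x}) ∩ (closedNbhdSet G X)ᶜ := by
  by_cases hvx : v ∈ closedNbhd G x
  · exact .inl hvx
  refine .inr ⟨⟨hv, fun h => hvx (Set.mem_singleton_iff.mp h ▸ mem_closedNbhd_self v)⟩, ?_⟩
  intro hvX
  obtain ⟨y, hy, hvy⟩ := mem_closedNbhdSet_iff.mp hvX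
  exact hvx (hX.eq_of_mem_ball2_of_mem_closedNbhd hx hy hv hvy ▸ hvy)

lemma ncard_le_of_forall_exists_mem_closedNbhd (hX : rIndependent G 2 X) {S T : Set V}
    (hTX : T ⊆ X) (hS : S.Finite) (hT : ∀ x ∈ T, ∃ s ∈ S, s ∈ closedNbhd G x) :
    T.ncard ≤ S.ncard := by
  choose! f hfS hfN using hT
  exact Set.ncard_le_ncard_of_injOn f hfS (fun a ha b hb hab =>
    hX.eq_of_mem_closedNbhd (hTX ha) (hTX hb) (hfN a ha) (hab ▸ hfN b hb)) hS

end rIndependent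

def exchangeNbhds (G : SimpleGraph V) (D B : Set V) : Set V :=
  (D \ ⋃ x ∈ B, closedNbhd G x) ∪ B

lemma isDominating_exchangeNbhds {D B : Set V} {d : V → V} (hdD : ∀ v, d v ∈ D)
    (hdN : ∀ v, d v ∈ closedNbhd G v)
    (hB : ∀ x ∈ B, ∀ v, d v ∈ closedNbhd G x → v ∈ closedNbhd G x) :
    IsDominating G (exchangeNbhds G D B) := by
  refine isDominating_iff.mpr fun v => ?_
  by_cases hU : d v ∈ ⋃ x ∈ B, closedNbhd G x
  · obtain ⟨x, hxB, hdx⟩ := Set.mem_iUnion₂.mp hU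
    exact ⟨x, .inr hxB, mem_closedNbhd_comm.mp (hB x hxB v hdx)⟩
  · exact ⟨d v, .inl ⟨hdD v, hU⟩, hdN v⟩

namespace rIndependent

variable {X D B : Set V}

lemma ncard_exchangeNbhds_le (hX : rIndependent G 2 X) (hBX : B ⊆ X) (hD : IsDominating G D)
    (hDfin : D.Finite) : (exchangeNbhds G D B).ncard ≤ D.ncard := by
  set U := ⋃ x ∈ B, closedNbhd G x
  have hB : B.ncard ≤ (D ∩ U).ncard := by
    refine hX.ncard_le_of_forall_exists_mem_closedNbhd hBX (hDfin.inter_of_left U) fun x hx => ?_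
    obtain ⟨u, huD, hux⟩ := isDominating_iff.mp hD x
    exact ⟨u, ⟨huD, Set.mem_iUnion₂.mpr ⟨x, hx, hux⟩⟩, hux⟩
  calc (exchangeNbhds G D B).ncard ≤ (D \ U).ncard + B.ncard := Set.ncard_union_le _ _
    _ ≤ (D ∩ U).ncard + (D \ U).ncard := by omega
    _ = D.ncard := Set.ncard_inter_add_ncard_sdiff_eq_ncard D U hDfin

lemma exchangeNbhds_inter_closedNbhd (hX : rIndependent G 2 X) (hBX : B ⊆ X) {x : V}
    (hx : x ∈ B) : exchangeNbhds G D B ∩ closedNbhd G x = {x} := by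
  refine Set.eq_singleton_iff_unique_mem.mpr ⟨⟨.inr hx, mem_closedNbhd_self x⟩, ?_⟩
  rintro v ⟨⟨-, hvU⟩ | hvB, hvx⟩
  · exact absurd (Set.mem_iUnion₂.mpr ⟨x, hx, hvx⟩) hvU
  · exact hX.eq_of_mem_closedNbhd (hBX hvB) (hBX hx) (mem_closedNbhd_self v) hvx

end rIndependent

end

/-- Let `X` be a `3`-independent set of a finite simple graph `G`,
`R = V(G) ∖ N[X]`, and `X' ⊆ X` a set of vertices all satisfying
`N²(x) ∩ R = R'` for one common set `R'`.  Then for every dominating set `D`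
of `G` there is a dominating set `D'` with `|D'| ≤ |D|` such that
`D' ∩ N[x] = {x}` for all but at most `|R'|` vertices `x ∈ X'`. -/
theorem exists_uninteresting_dominating {V : Type*} [Fintype V]
    (G : SimpleGraph V) (X : Set V) (hX : rIndependent G 3 X)
    (X' : Set V) (hX'sub : X' ⊆ X) (R' : Set V)
    (hR' : ∀ x ∈ X', (ball2 G x \ {x}) ∩ (closedNbhdSet G X)ᶜ = R')
    (D : Set V) (hD : IsDominating G D) :
    ∃ D' : Set V, IsDominating G D' ∧ D'.ncard ≤ D.ncard ∧
      {x ∈ X' | D' ∩ closedNbhd G x ≠ {x}}.ncard ≤ R'.ncard := by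
  choose d hdD hdN using isDominating_iff.mp hD
  have hX2 : rIndependent G 2 X := hX.mono_s15 (by norm_num)
  set B := {x ∈ X' | ∀ r ∈ R', d r ∉ closedNbhd G x}
  have hBX : B ⊆ X := fun x hx => hX'sub hx.1
  have hB : ∀ x ∈ B, ∀ v, d v ∈ closedNbhd G x → v ∈ closedNbhd G x := by
    intro x hx v hdv
    have hv := mem_ball2_of_mem_closedNbhd hdv (mem_closedNbhd_comm.mp (hdN v))
    refine (hX.mem_closedNbhd_or_mem_residual (hX'sub hx.1) hv).resolve_right ?_
    rw [hR' x hx.1]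
    exact fun hvR => hx.2 v hvR hdv
  refine ⟨exchangeNbhds G D B, isDominating_exchangeNbhds hdD hdN hB,
    hX2.ncard_exchangeNbhds_le hBX hD D.toFinite, ?_⟩
  have hbad : ∀ x ∈ {x ∈ X' | exchangeNbhds G D B ∩ closedNbhd G x ≠ {x}},
      ∃ s ∈ d '' R', s ∈ closedNbhd G x := by
    rintro x ⟨hx, hne⟩
    by_contra! hfree
    exact hne (hX2.exchangeNbhds_inter_closedNbhd hBX ⟨hx, fun r hr => hfree _ ⟨r, hr, rfl⟩⟩)
  calc _ ≤ (d '' R').ncard := hX2.ncard_le_of_forall_exists_mem_closedNbhd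
        (fun x hx => hX'sub hx.1) (Set.toFinite _) hbad
    _ ≤ R'.ncard := Set.ncard_image_le R'.toFinite
end
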